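/- arXiv:1707.04137 — 6 statements merged into one kernel-verified Lean document; each statement's English description precedes it below -/
import Mathlib

section
/- Let U be a 2×2 real symmetric matrix and let A be a 2×2 real symmetric positive semidefinite matrix. Then the function X ↦ tr(A·(U − X)⁻¹) is convex on the convex set S = {X : X is a 2×2 real symmetric matrix and U − X is positive definite}. -/
open Matrix

variable {n : Type*} [Fintype n] [DecidableEq n]

lemma sym_dot {P : Matrix n n ℝ} (hP : P.IsHermitian) (u w : n → ℝ) :
    u ⬝ᵥ P *ᵥ w = w ⬝ᵥ P *ᵥ u := by
  rw [Matrix.dotProduct_mulVec, ← Matrix.mulVec_transpose, dotProduct_comm]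
  congr 1
  have : Pᵀ = P := by simpa [Matrix.IsHermitian, Matrix.conjTranspose_eq_transpose_of_trivial] using hP
  rw [this]

lemma psd_trace_nonneg {M : Matrix n n ℝ} (hM : M.PosSemidef) : 0 ≤ M.trace := by
  rw [Matrix.trace]
  refine Finset.sum_nonneg fun i _ => ?_
  have := hM.dotProduct_mulVec_nonneg (Pi.single i 1)
  simpa [Matrix.mulVec_single, Matrix.diag] using this

lemma trace_mul_nonneg {A M : Matrix n n ℝ} (hA : A.PosSemidef) (hM : M.PosSemidef) :
    0 ≤ (A * M).trace := by
  obtain ⟨B, hB⟩ : ∃ B : Matrix n n ℝ, A = star B * B := by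
    open scoped MatrixOrder in
    exact CStarAlgebra.nonneg_iff_eq_star_mul_self.mp hA.nonneg
  have h2 : (A * M).trace = (B * M * Bᴴ).trace := by
    rw [hB, Matrix.mul_assoc, Matrix.trace_mul_comm]
    rfl
  rw [h2]
  exact psd_trace_nonneg (hM.mul_mul_conjTranspose_same B)

lemma inv_quad_lower {P : Matrix n n ℝ} (hP : P.PosDef) (v x : n → ℝ) :
    2 * (v ⬝ᵥ x) - x ⬝ᵥ P *ᵥ x ≤ v ⬝ᵥ P⁻¹ *ᵥ v := by
  have hcancel : P *ᵥ (P⁻¹ *ᵥ v) = v := by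
    rw [Matrix.mulVec_mulVec, Matrix.mul_nonsing_inv _ hP.det_pos.ne'.isUnit, Matrix.one_mulVec]
  have h0 : 0 ≤ (x - P⁻¹ *ᵥ v) ⬝ᵥ P *ᵥ (x - P⁻¹ *ᵥ v) := by
    simpa using hP.posSemidef.dotProduct_mulVec_nonneg (x - P⁻¹ *ᵥ v)
  rw [Matrix.mulVec_sub, dotProduct_sub, sub_dotProduct, sub_dotProduct, hcancel] at h0
  have e1 : (P⁻¹ *ᵥ v) ⬝ᵥ P *ᵥ x = x ⬝ᵥ v := by
    rw [sym_dot hP.isHermitian, hcancel]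
  have e2 : x ⬝ᵥ v = v ⬝ᵥ x := dotProduct_comm _ _
  have e3 : (P⁻¹ *ᵥ v) ⬝ᵥ v = v ⬝ᵥ P⁻¹ *ᵥ v := dotProduct_comm _ _
  linarith

lemma inv_operator_convex {Y Z : Matrix n n ℝ} (hY : Y.PosDef) (hZ : Z.PosDef)
    {a b : ℝ} (ha : 0 ≤ a) (hb : 0 ≤ b) (hab : a + b = 1)
    (hW : (a • Y + b • Z).PosDef) :
    (a • Y⁻¹ + b • Z⁻¹ - (a • Y + b • Z)⁻¹).PosSemidef := by
  have h1 := hY.inv.isHermitian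
  have h2 := hZ.inv.isHermitian
  have h3 := hW.inv.isHermitian
  refine Matrix.PosSemidef.of_dotProduct_mulVec_nonneg ?_ ?_
  · show _ᴴ = _
    simp [Matrix.conjTranspose_sub, Matrix.conjTranspose_add, Matrix.conjTranspose_smul,
      ← Matrix.conjTranspose_eq_transpose_of_trivial, h1.eq, h2.eq, h3.eq]
  · intro v
    set W := a • Y + b • Z with hWdef
    set x := W⁻¹ *ᵥ v with hx
    have hWx : W *ᵥ x = v := by
      rw [hx, Matrix.mulVec_mulVec, Matrix.mul_nonsing_inv _ hW.det_pos.ne'.isUnit,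
        Matrix.one_mulVec]
    have hYq := inv_quad_lower hY v x
    have hZq := inv_quad_lower hZ v x
    have hsum : a * (x ⬝ᵥ Y *ᵥ x) + b * (x ⬝ᵥ Z *ᵥ x) = v ⬝ᵥ x := by
      have : x ⬝ᵥ W *ᵥ x = v ⬝ᵥ x := by rw [hWx, dotProduct_comm]
      rw [hWdef] at this
      rw [← this, Matrix.add_mulVec, Matrix.smul_mulVec, Matrix.smul_mulVec,
        dotProduct_add, dotProduct_smul, dotProduct_smul, smul_eq_mul, smul_eq_mul]
    have hY2 := mul_le_mul_of_nonneg_left hYq ha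
    have hZ2 := mul_le_mul_of_nonneg_left hZq hb
    have e1 : a * (v ⬝ᵥ x) + b * (v ⬝ᵥ x) = v ⬝ᵥ x := by rw [← add_mul, hab, one_mul]
    have hgoal : star v ⬝ᵥ ((a • Y⁻¹ + b • Z⁻¹ - W⁻¹) *ᵥ v)
        = a * (v ⬝ᵥ Y⁻¹ *ᵥ v) + b * (v ⬝ᵥ Z⁻¹ *ᵥ v) - v ⬝ᵥ x := by
      simp only [star_trivial, Matrix.sub_mulVec, Matrix.add_mulVec,
        Matrix.smul_mulVec, dotProduct_sub, dotProduct_add, dotProduct_smul,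
        smul_eq_mul, hx]
    rw [hgoal]
    nlinarith [hY2, hZ2, e1, hsum]

lemma posSemidef_smul' {c : ℝ} (hc : 0 ≤ c) {M : Matrix n n ℝ} (hM : M.PosSemidef) :
    (c • M).PosSemidef := by
  refine Matrix.PosSemidef.of_dotProduct_mulVec_nonneg ?_ (fun x => ?_)
  · show _ᴴ = _
    rw [Matrix.conjTranspose_smul, star_trivial, hM.1.eq]
  · rw [Matrix.smul_mulVec, dotProduct_smul, smul_eq_mul]
    exact mul_nonneg hc (hM.dotProduct_mulVec_nonneg x)

lemma posDef_smul' {c : ℝ} (hc : 0 < c) {M : Matrix n n ℝ} (hM : M.PosDef) :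
    (c • M).PosDef := by
  refine Matrix.PosDef.of_dotProduct_mulVec_pos ?_ (fun x hx => ?_)
  · show _ᴴ = _
    rw [Matrix.conjTranspose_smul, star_trivial, hM.1.eq]
  · rw [Matrix.smul_mulVec, dotProduct_smul, smul_eq_mul]
    exact mul_pos hc (hM.dotProduct_mulVec_pos hx)

lemma comb_posDef {P Q : Matrix n n ℝ} (hP : P.PosDef) (hQ : Q.PosDef)
    {a b : ℝ} (ha : 0 ≤ a) (hb : 0 ≤ b) (hab : a + b = 1) : (a • P + b • Q).PosDef := by
  rcases ha.eq_or_lt' with h | h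
  · have hb1 : b = 1 := by linarith
    rw [h, hb1, zero_smul, one_smul, zero_add]
    exact hQ
  · exact (posDef_smul' h hP).add_posSemidef (posSemidef_smul' hb hQ.posSemidef)

lemma comb_sub (U X Y : Matrix n n ℝ) {a b : ℝ} (hab : a + b = 1) :
    U - (a • X + b • Y) = a • (U - X) + b • (U - Y) := by
  have hU : a • U + b • U = U := by rw [← add_smul, hab, one_smul]
  rw [smul_sub, smul_sub]
  conv_lhs => rw [← hU]
  abel

/-- For a 2×2 real symmetric matrix `U` and a 2×2 real symmetric positive
semidefinite matrix `A`, the function `X ↦ tr (A * (U - X)⁻¹)` is convex on the convex set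
`S = {X | X symmetric and U - X positive definite}`. -/
theorem stmt0 (U A : Matrix (Fin 2) (Fin 2) ℝ) (hU : Uᵀ = U) (hA : Aᵀ = A)
    (hApsd : A.PosSemidef) :
    ConvexOn ℝ {X : Matrix (Fin 2) (Fin 2) ℝ | Xᵀ = X ∧ (U - X).PosDef}
      (fun X => (A * (U - X)⁻¹).trace) := by
  constructor
  · intro X hX Y hY a b ha hb hab
    refine ⟨?_, ?_⟩
    · rw [Matrix.transpose_add, Matrix.transpose_smul, Matrix.transpose_smul, hX.1, hY.1]
    · rw [comb_sub U X Y hab]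
      exact comb_posDef hX.2 hY.2 ha hb hab
  · intro X hX Y hY a b ha hb hab
    simp only [smul_eq_mul]
    have hWpd : (a • (U - X) + b • (U - Y)).PosDef := comb_posDef hX.2 hY.2 ha hb hab
    have hM := inv_operator_convex hX.2 hY.2 ha hb hab hWpd
    have htr := trace_mul_nonneg hApsd hM
    have expand : (A * (a • (U - X)⁻¹ + b • (U - Y)⁻¹ - (a • (U - X) + b • (U - Y))⁻¹)).trace
        = a * (A * (U - X)⁻¹).trace + b * (A * (U - Y)⁻¹).trace
          - (A * (a • (U - X) + b • (U - Y))⁻¹).trace := by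
      simp [Matrix.mul_sub, Matrix.mul_add, mul_smul_comm, Matrix.trace_sub,
        Matrix.trace_add, Matrix.trace_smul, smul_eq_mul]
    rw [expand] at htr
    rw [comb_sub U X Y hab]
    linarith
end

section
/- Let L, U, B̄ be 2×2 real symmetric matrices such that U − B̄ and B̄ − L are positive definite; let G₊, G₋ be 2×2 real symmetric matrices and τ ≥ 0 a real number. Define for symmetric X the function φ(X) = tr(((U − B̄)G₊(U − B̄) + τ(X − B̄)²)·(U − X)⁻¹) + tr(((L − B̄)G₋(L − B̄) − τ(X − B̄)²)·(L − X)⁻¹). Then for every 2×2 real symmetric matrix Y, the function t ↦ φ(B̄ + tY) is differentiable at t = 0 with derivative tr((G₊ + G₋)·Y). -/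
open Matrix

section Aux

attribute [local instance] Matrix.linftyOpNormedRing Matrix.linftyOpNormedAlgebra

theorem stmt3_aux (M₀ C W Y : Matrix (Fin 2) (Fin 2) ℝ) (τ : ℝ) (hM : IsUnit M₀.det) :
    HasDerivAt (fun t : ℝ => ((C + (τ * t ^ 2) • W) * (M₀ - t • Y)⁻¹).trace)
      ((C * (M₀⁻¹ * Y * M₀⁻¹)).trace) 0 := by
  haveI : CompleteSpace (Matrix (Fin 2) (Fin 2) ℝ) := FiniteDimensional.complete ℝ _
  obtain ⟨u, hu⟩ := (Matrix.isUnit_iff_isUnit_det M₀).2 hM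
  -- derivative of t ↦ M₀ - t • Y
  have hM' : HasDerivAt (fun t : ℝ => M₀ - t • Y) (-Y) 0 := by
    have h0 := ((hasDerivAt_id (0:ℝ)).smul_const Y).const_sub M₀
    simp only [id, one_smul] at h0
    exact h0
  -- derivative of the inverse
  have hinv : HasDerivAt (fun t : ℝ => (M₀ - t • Y)⁻¹) (M₀⁻¹ * Y * M₀⁻¹) 0 := by
    have hfd : HasFDerivAt Ring.inverse
        (-(ContinuousLinearMap.mulLeftRight ℝ (Matrix (Fin 2) (Fin 2) ℝ) ↑u⁻¹ ↑u⁻¹))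
        ((fun t : ℝ => M₀ - t • Y) 0) := by
      simpa [hu] using hasFDerivAt_ringInverse (𝕜 := ℝ) u
    have := hfd.comp_hasDerivAt 0 hM'
    have heq : (fun t : ℝ => Ring.inverse (M₀ - t • Y)) = fun t : ℝ => (M₀ - t • Y)⁻¹ := by
      funext t; rw [Matrix.nonsing_inv_eq_ringInverse]
    rw [Function.comp_def, heq] at this
    convert this using 1
    · rfl
    · rfl
    · rfl
    simp [ContinuousLinearMap.mulLeftRight_apply, ← Matrix.coe_units_inv, hu,
      Matrix.coe_units_inv, mul_assoc]
  -- derivative of the quadratic part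
  have hA : HasDerivAt (fun t : ℝ => C + (τ * t ^ 2) • W) 0 0 := by
    have h0 := (((hasDerivAt_pow 2 (0:ℝ)).const_mul τ).smul_const W).const_add C
    convert h0 using 1
    · rfl
    · rfl
    · rfl
    simp
  have hmul := hA.mul hinv
  -- compose with the trace
  have htr := ((Matrix.traceLinearMap (Fin 2) ℝ ℝ).toContinuousLinearMap.hasFDerivAt).comp_hasDerivAt 0 hmul
  simp at htr
  exact htr

end Aux

/-- First-order matching property of the hyperbolic approximation at its
expansion point `B̄`: for every symmetric direction `Y`, `t ↦ φ(B̄ + tY)` is differentiable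
at `t = 0` with derivative `tr ((Gp + Gm) * Y)`. -/
theorem stmt3 (L U B Gp Gm : Matrix (Fin 2) (Fin 2) ℝ) (τ : ℝ)
    (hL : Lᵀ = L) (hU : Uᵀ = U) (hB : Bᵀ = B) (hGp : Gpᵀ = Gp) (hGm : Gmᵀ = Gm)
    (hUB : (U - B).PosDef) (hBL : (B - L).PosDef) (hτ : 0 ≤ τ)
    (Y : Matrix (Fin 2) (Fin 2) ℝ) (hY : Yᵀ = Y) :
    HasDerivAt (fun t : ℝ =>
        (((U - B) * Gp * (U - B) + τ • ((B + t • Y) - B) ^ 2) * (U - (B + t • Y))⁻¹).trace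
      + (((L - B) * Gm * (L - B) - τ • ((B + t • Y) - B) ^ 2) * (L - (B + t • Y))⁻¹).trace)
      (((Gp + Gm) * Y).trace) 0 := by
  have hdU : IsUnit (U - B).det := isUnit_iff_ne_zero.2 (ne_of_gt hUB.det_pos)
  have hdL : IsUnit (L - B).det := by
    rw [show (L - B) = -(B - L) from (neg_sub B L).symm, Matrix.det_neg]
    simpa using isUnit_iff_ne_zero.2 (ne_of_gt hBL.det_pos)
  have h₁ := stmt3_aux (U - B) ((U - B) * Gp * (U - B)) (Y ^ 2) Y τ hdU
  have h₂ := stmt3_aux (L - B) ((L - B) * Gm * (L - B)) (Y ^ 2) Y (-τ) hdL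
  have h := h₁.add h₂
  have heq : ∀ t : ℝ,
      (((U - B) * Gp * (U - B) + (τ * t ^ 2) • Y ^ 2) * ((U - B) - t • Y)⁻¹).trace
      + (((L - B) * Gm * (L - B) + (-τ * t ^ 2) • Y ^ 2) * ((L - B) - t • Y)⁻¹).trace
      = (((U - B) * Gp * (U - B) + τ • ((B + t • Y) - B) ^ 2) * (U - (B + t • Y))⁻¹).trace
      + (((L - B) * Gm * (L - B) - τ • ((B + t • Y) - B) ^ 2) * (L - (B + t • Y))⁻¹).trace := by
    intro t
    rw [add_sub_cancel_left, sub_add_eq_sub_sub, sub_add_eq_sub_sub, smul_pow, smul_smul,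
      neg_mul, neg_smul, ← sub_eq_add_neg]
  have h' : HasDerivAt (fun t : ℝ =>
        (((U - B) * Gp * (U - B) + τ • ((B + t • Y) - B) ^ 2) * (U - (B + t • Y))⁻¹).trace
      + (((L - B) * Gm * (L - B) - τ • ((B + t • Y) - B) ^ 2) * (L - (B + t • Y))⁻¹).trace)
      ((((U - B) * Gp * (U - B)) * ((U - B)⁻¹ * Y * (U - B)⁻¹)).trace
        + (((L - B) * Gm * (L - B)) * ((L - B)⁻¹ * Y * (L - B)⁻¹)).trace) 0 := by
    refine HasDerivAt.congr_of_eventuallyEq h ?_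
    exact Filter.Eventually.of_forall fun t => (heq t).symm
  convert h' using 1
  rw [show (U - B) * Gp * (U - B) * ((U - B)⁻¹ * Y * (U - B)⁻¹)
      = (U - B) * Gp * ((U - B) * (U - B)⁻¹) * Y * (U - B)⁻¹ from by
        simp only [Matrix.mul_assoc],
    show (L - B) * Gm * (L - B) * ((L - B)⁻¹ * Y * (L - B)⁻¹)
      = (L - B) * Gm * ((L - B) * (L - B)⁻¹) * Y * (L - B)⁻¹ from by
        simp only [Matrix.mul_assoc],
    Matrix.mul_nonsing_inv _ hdU, Matrix.mul_nonsing_inv _ hdL, Matrix.mul_one, Matrix.mul_one,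
    Matrix.trace_mul_cycle ((U - B) * Gp) Y (U - B)⁻¹,
    Matrix.trace_mul_cycle ((L - B) * Gm) Y (L - B)⁻¹,
    show (U - B)⁻¹ * ((U - B) * Gp) = (U - B)⁻¹ * (U - B) * Gp from by
      simp only [Matrix.mul_assoc],
    show (L - B)⁻¹ * ((L - B) * Gm) = (L - B)⁻¹ * (L - B) * Gm from by
      simp only [Matrix.mul_assoc],
    Matrix.nonsing_inv_mul _ hdU, Matrix.nonsing_inv_mul _ hdL, Matrix.one_mul, Matrix.one_mul,
    Matrix.add_mul, Matrix.trace_add]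
end

section
/- Let L, U, B̄ be 2×2 real symmetric matrices with U − B̄ and B̄ − L positive definite, and let K be a compact subset of {X : X is a 2×2 real symmetric matrix, U − X positive definite, X − L positive definite}. Then there exists a constant c > 0 such that for every X ∈ K and every 2×2 real symmetric matrix Y, the function g(t) = tr((X + tY − B̄)²·(U − X − tY)⁻¹) + tr((X + tY − B̄)²·(X + tY − L)⁻¹) is twice differentiable at t = 0 and g''(0) ≥ c·‖Y‖_F², where ‖Y‖_F is the Frobenius norm of Y. -/
open Matrix

set_option maxHeartbeats 1000000

namespace Stmt6Aux

abbrev Mat := Matrix (Fin 2) (Fin 2) ℝ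

lemma tr_formula (A : Mat) :
    (Aᵀ * A).trace = A 0 0 ^ 2 + A 1 0 ^ 2 + A 0 1 ^ 2 + A 1 1 ^ 2 := by
  simp [Matrix.trace_fin_two, Matrix.mul_apply, Fin.sum_univ_two, Matrix.transpose_apply, sq]
  ring

lemma tr_nonneg (A : Mat) : 0 ≤ (Aᵀ * A).trace := by
  rw [tr_formula]; positivity

lemma tr_pos {A : Mat} (h : A ≠ 0) : 0 < (Aᵀ * A).trace := by
  rcases (tr_nonneg A).lt_or_eq with h' | h'
  · exact h'
  · exfalso
    apply h
    rw [tr_formula] at h'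
    have sq0 : ∀ x : ℝ, x ^ 2 ≤ 0 → x = 0 := fun x hx =>
      pow_eq_zero_iff two_ne_zero |>.mp (le_antisymm hx (sq_nonneg x))
    apply Matrix.ext
    rw [Fin.forall_fin_two]
    constructor <;> rw [Fin.forall_fin_two] <;> constructor <;>
      · show _ = (0 : Mat) _ _
        simp only [Matrix.zero_apply]
        apply sq0
        nlinarith [sq_nonneg (A 0 0), sq_nonneg (A 1 0), sq_nonneg (A 0 1), sq_nonneg (A 1 1)]

lemma trace_identity (A M C : Mat) (hM : IsUnit M) (hAMC : A + M = C) :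
    (A ^ 2 * M⁻¹).trace = (C ^ 2 * M⁻¹).trace - 2 * C.trace + M.trace := by
  have hd : IsUnit M.det := (Matrix.isUnit_iff_isUnit_det M).mp hM
  have h1 : M * M⁻¹ = 1 := Matrix.mul_nonsing_inv _ hd
  have hA : A = C - M := eq_sub_of_add_eq hAMC
  have expand : A ^ 2 * M⁻¹ = C ^ 2 * M⁻¹ - C - M * C * M⁻¹ + M := by
    rw [hA]
    calc (C - M) ^ 2 * M⁻¹
        = C ^ 2 * M⁻¹ - C * (M * M⁻¹) - M * C * M⁻¹ + M * (M * M⁻¹) := by noncomm_ring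
      _ = C ^ 2 * M⁻¹ - C - M * C * M⁻¹ + M := by rw [h1, mul_one, mul_one]
  rw [expand, Matrix.trace_add, Matrix.trace_sub, Matrix.trace_sub]
  have hc : (M * C * M⁻¹).trace = C.trace := by
    rw [Matrix.trace_mul_cycle, Matrix.nonsing_inv_mul _ hd, Matrix.one_mul]
  rw [hc]; ring


open scoped MatrixOrder in
lemma pos_term_key (C u Y : Mat) (hC : C.PosDef) (hu : u.PosDef) (hY : Yᵀ = Y) :
    ∃ A : Mat, (C ^ 2 * (u * Y * u * Y * u)).trace = (Aᵀ * A).trace ∧ (Y ≠ 0 → A ≠ 0) := by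
  have hCs : Cᵀ = C := by
    rw [← Matrix.conjTranspose_eq_transpose_of_trivial]; exact hC.isHermitian
  have hus : uᵀ = u := by
    rw [← Matrix.conjTranspose_eq_transpose_of_trivial]; exact hu.isHermitian
  set s := CFC.sqrt u with hs_def
  have hss : s * s = u := CFC.sqrt_mul_sqrt_self u hu.posSemidef.nonneg
  have hssym : sᵀ = s := by
    rw [← Matrix.conjTranspose_eq_transpose_of_trivial]
    exact (CFC.sqrt_nonneg u).posSemidef.isHermitian
  refine ⟨C * u * Y * s, ?_, ?_⟩
  · have ht : (C * u * Y * s)ᵀ = s * Y * u * C := by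
      simp [Matrix.transpose_mul, hCs, hus, hY, hssym, Matrix.mul_assoc]
    rw [ht, Matrix.trace_mul_comm (s * Y * u * C) (C * u * Y * s)]
    have e : C * u * Y * s * (s * Y * u * C) = C * (u * Y * u * Y * u) * C := by
      have e1 : C * u * Y * s * (s * Y * u * C) = C * u * Y * (s * s) * Y * u * C := by
        noncomm_ring
      rw [e1, hss]; noncomm_ring
    rw [e, Matrix.trace_mul_cycle C (u * Y * u * Y * u) C, ← pow_two]
  · intro hY0 hA0
    apply hY0
    have hdu : u.det ≠ 0 := hu.det_pos.ne'
    have hds : s.det ≠ 0 := by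
      intro h0
      rw [← hss, Matrix.det_mul, h0, mul_zero] at hdu
      exact hdu rfl
    have hdCu : (C * u).det ≠ 0 := by
      rw [Matrix.det_mul]
      exact mul_ne_zero hC.det_pos.ne' hdu
    have h1 : C * u * Y = 0 := by
      have : C * u * Y = C * u * Y * s * s⁻¹ := by
        rw [Matrix.mul_assoc (C * u * Y), Matrix.mul_nonsing_inv _ (isUnit_iff_ne_zero.mpr hds),
          Matrix.mul_one]
      rw [this, hA0, Matrix.zero_mul]
    have : Y = (C * u)⁻¹ * (C * u * Y) := by
      rw [← Matrix.mul_assoc, Matrix.nonsing_inv_mul _ (isUnit_iff_ne_zero.mpr hdCu),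
        Matrix.one_mul]
    rw [this, h1, Matrix.mul_zero]

lemma pos_term_nonneg (C u Y : Mat) (hC : C.PosDef) (hu : u.PosDef) (hY : Yᵀ = Y) :
    0 ≤ (C ^ 2 * (u * Y * u * Y * u)).trace := by
  obtain ⟨A, hA, -⟩ := pos_term_key C u Y hC hu hY
  rw [hA]; exact tr_nonneg A

lemma pos_term_pos (C u Y : Mat) (hC : C.PosDef) (hu : u.PosDef) (hY : Yᵀ = Y) (hY0 : Y ≠ 0) :
    0 < (C ^ 2 * (u * Y * u * Y * u)).trace := by
  obtain ⟨A, hA, hne⟩ := pos_term_key C u Y hC hu hY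
  rw [hA]; exact tr_pos (hne hY0)


section Calculus

attribute [local instance] Matrix.linftyOpNormedRing Matrix.linftyOpNormedAlgebra

noncomputable def phi (C : Mat) : Mat →L[ℝ] ℝ :=
  LinearMap.toContinuousLinearMap
    ((Matrix.traceLinearMap (Fin 2) ℝ ℝ).comp (LinearMap.mulLeft ℝ C))

lemma phi_apply (C A : Mat) : phi C A = (C * A).trace := rfl

lemma det_cont (M Y : Mat) : Continuous fun t : ℝ => (M - t • Y).det := by
  simp only [Matrix.det_fin_two, Matrix.sub_apply, Matrix.smul_apply, smul_eq_mul]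
  fun_prop

lemma ev_unit (M Y : Mat) (hM : IsUnit M) :
    ∀ᶠ t in nhds (0 : ℝ), IsUnit (M - t • Y) := by
  have h0 : (fun t : ℝ => (M - t • Y).det) 0 ≠ 0 := by
    simpa using ((Matrix.isUnit_iff_isUnit_det M).mp hM).ne_zero
  have := (det_cont M Y).continuousAt.eventually_ne h0
  filter_upwards [this] with t ht
  exact (Matrix.isUnit_iff_isUnit_det _).mpr (isUnit_iff_ne_zero.mpr ht)

lemma hasDerivAt_inv_aff (M Y : Mat) (t : ℝ) (ht : IsUnit (M - t • Y)) :
    HasDerivAt (fun s : ℝ => Ring.inverse (M - s • Y))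
      (Ring.inverse (M - t • Y) * Y * Ring.inverse (M - t • Y)) t := by
  have haff : HasDerivAt (fun s : ℝ => M - s • Y) (-((1 : ℝ) • Y)) t :=
    ((hasDerivAt_id t).smul_const Y).const_sub M
  obtain ⟨x, hx⟩ := ht
  have hinv := hasFDerivAt_ringInverse (𝕜 := ℝ) x
  rw [hx] at hinv
  have hcomp := hinv.comp_hasDerivAt t haff
  have hval : Ring.inverse (M - t • Y) = ↑x⁻¹ := by
    rw [← hx, Ring.inverse_unit]
  rw [hval]; simp [one_smul, Function.comp_def] at hcomp ⊢; exact hcomp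

lemma main_calc (C M Y : Mat) (hM : IsUnit M) :
    ContDiffAt ℝ 2 (fun t : ℝ => (C * (M - t • Y)⁻¹).trace) 0 ∧
    (∀ᶠ t in nhds (0 : ℝ), IsUnit (M - t • Y)) ∧
    (∀ᶠ t in nhds (0 : ℝ), HasDerivAt (fun s : ℝ => (C * (M - s • Y)⁻¹).trace)
        ((C * ((M - t • Y)⁻¹ * Y * (M - t • Y)⁻¹)).trace) t) ∧
    HasDerivAt (fun t : ℝ => (C * ((M - t • Y)⁻¹ * Y * (M - t • Y)⁻¹)).trace)
      (2 * (C * (M⁻¹ * Y * M⁻¹ * Y * M⁻¹)).trace) 0 := by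
  simp only [Matrix.nonsing_inv_eq_ringInverse]
  have hu0 : HasDerivAt (fun s : ℝ => Ring.inverse (M - s • Y))
      (Ring.inverse M * Y * Ring.inverse M) 0 := by
    have := hasDerivAt_inv_aff M Y 0 (by simpa using hM)
    simpa using this
  refine ⟨?_, ev_unit M Y hM, ?_, ?_⟩
  · have haffC : ContDiff ℝ 2 fun t : ℝ => M - t • Y :=
      contDiff_const.sub (contDiff_id.smul contDiff_const)
    have hinvC : ContDiffAt ℝ 2 (Ring.inverse : Mat → Mat) (M - (0 : ℝ) • Y) := by
      have := contDiffAt_ringInverse ℝ (n := 2) hM.unit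
      rw [hM.unit_spec] at this
      simpa using this
    have h3 := hinvC.comp 0 haffC.contDiffAt
    exact (phi C).contDiff.contDiffAt.comp 0 h3
  · filter_upwards [ev_unit M Y hM] with t ht
    have h1 := hasDerivAt_inv_aff M Y t ht
    have := ((phi C).hasFDerivAt).comp_hasDerivAt t h1
    simp [Function.comp_def] at this; exact this
  · have hprod : HasDerivAt
        (fun s : ℝ => Ring.inverse (M - s • Y) * Y * Ring.inverse (M - s • Y))
        (Ring.inverse M * Y * Ring.inverse M * Y * Ring.inverse (M - (0:ℝ) • Y)
          + Ring.inverse (M - (0:ℝ) • Y) * Y * (Ring.inverse M * Y * Ring.inverse M)) 0 :=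
      (hu0.mul_const Y).mul hu0
    have := ((phi C).hasFDerivAt).comp_hasDerivAt 0 hprod
    have h2 : phi C (Ring.inverse M * Y * Ring.inverse M * Y * Ring.inverse (M - (0:ℝ) • Y)
          + Ring.inverse (M - (0:ℝ) • Y) * Y * (Ring.inverse M * Y * Ring.inverse M))
        = 2 * (C * (Ring.inverse M * Y * Ring.inverse M * Y * Ring.inverse M)).trace := by
      simp only [zero_smul, sub_zero, phi_apply, Matrix.mul_add, Matrix.trace_add, two_mul,
        Matrix.mul_assoc]
    erw [h2] at this
    simpa [phi_apply, Function.comp_def] using this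

end Calculus

noncomputable def Phi (U L B X Y : Mat) : ℝ :=
  2 * ((U - B) ^ 2 * ((U - X)⁻¹ * Y * (U - X)⁻¹ * Y * (U - X)⁻¹)).trace
  + 2 * ((B - L) ^ 2 * ((X - L)⁻¹ * Y * (X - L)⁻¹ * Y * (X - L)⁻¹)).trace

def SymS : Set Mat := {Y | Yᵀ = Y ∧ (Yᵀ * Y).trace = 1}

lemma SymS_nonempty : SymS.Nonempty := by
  refine ⟨!![1, 0; 0, 0], ?_, ?_⟩
  · ext i j
    fin_cases i <;> fin_cases j <;> simp [Matrix.transpose_apply]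
  · rw [tr_formula]
    norm_num

lemma isCompact_SymS : IsCompact SymS := by
  have hcl : IsClosed SymS := by
    have h1 : IsClosed {Y : Mat | Yᵀ = Y} :=
      isClosed_eq (continuous_id.matrix_transpose) continuous_id
    have h2 : IsClosed {Y : Mat | (Yᵀ * Y).trace = 1} :=
      isClosed_eq ((continuous_id.matrix_transpose.matrix_mul continuous_id).matrix_trace)
        continuous_const
    exact h1.inter h2
  have hT : IsCompact (Set.pi Set.univ
      (fun _ : Fin 2 => Set.pi Set.univ fun _ : Fin 2 => Set.Icc (-1 : ℝ) 1) : Set Mat) :=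
    isCompact_univ_pi fun _ => isCompact_univ_pi fun _ => isCompact_Icc
  refine hT.of_isClosed_subset hcl ?_
  rintro (Y : Mat) ⟨-, h1⟩
  rw [tr_formula] at h1
  have key : ∀ i j, Y i j ^ 2 ≤ 1 := by
    rw [Fin.forall_fin_two]
    constructor <;> rw [Fin.forall_fin_two] <;> constructor <;>
      nlinarith [sq_nonneg (Y 0 0), sq_nonneg (Y 1 0), sq_nonneg (Y 0 1), sq_nonneg (Y 1 1)]
  intro i _ j _
  constructor <;> nlinarith [key i j, sq_nonneg (Y i j - 1), sq_nonneg (Y i j + 1)]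

lemma contOn_inv (f : Mat → Mat) (hf : Continuous f) (K : Set Mat)
    (hK : ∀ X ∈ K, (f X).det ≠ 0) :
    ContinuousOn (fun X : Mat => (f X)⁻¹) K := by
  intro X hX
  have h1 : ContinuousAt Inv.inv (f X) := by
    apply continuousAt_matrix_inv
    rw [Ring.inverse_eq_inv']
    exact continuousAt_inv₀ (hK X hX)
  exact (h1.comp hf.continuousAt).continuousWithinAt

lemma exists_min (L U B : Mat) (hUB : (U - B).PosDef) (hBL : (B - L).PosDef)
    (K : Set Mat) (hKc : IsCompact K)
    (hK : K ⊆ {X | Xᵀ = X ∧ (U - X).PosDef ∧ (X - L).PosDef}) :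
    ∃ c > (0 : ℝ), ∀ X ∈ K, ∀ Y ∈ SymS, c ≤ Phi U L B X Y := by
  rcases K.eq_empty_or_nonempty with rfl | hKne
  · exact ⟨1, one_pos, fun X hX => absurd hX (Set.notMem_empty X)⟩
  have hdetU : ∀ X ∈ K, (U - X).det ≠ 0 := fun X hX => (hK hX).2.1.det_pos.ne'
  have hdetL : ∀ X ∈ K, (X - L).det ≠ 0 := fun X hX => (hK hX).2.2.det_pos.ne'
  -- continuity of Phi on K ×ˢ SymS
  have hmU : ContinuousOn (fun p : Mat × Mat => (U - p.1)⁻¹) (K ×ˢ SymS) :=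
    (contOn_inv _ (continuous_const.sub continuous_id) K hdetU).comp
      continuous_fst.continuousOn fun p hp => hp.1
  have hmL : ContinuousOn (fun p : Mat × Mat => (p.1 - L)⁻¹) (K ×ˢ SymS) :=
    (contOn_inv _ (continuous_id.sub continuous_const) K hdetL).comp
      continuous_fst.continuousOn fun p hp => hp.1
  have hY2 : ContinuousOn (fun p : Mat × Mat => p.2) (K ×ˢ SymS) :=
    continuous_snd.continuousOn
  have hPhi : ContinuousOn (fun p : Mat × Mat => Phi U L B p.1 p.2) (K ×ˢ SymS) := by
    unfold Phi
    apply ContinuousOn.add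
    · exact (continuousOn_const.mul ((Continuous.matrix_trace continuous_id).comp_continuousOn
        (continuousOn_const.mul (((((hmU.mul hY2).mul hmU).mul hY2).mul hmU)))))
    · exact (continuousOn_const.mul ((Continuous.matrix_trace continuous_id).comp_continuousOn
        (continuousOn_const.mul (((((hmL.mul hY2).mul hmL).mul hY2).mul hmL)))))
  obtain ⟨p₀, hp₀, hmin⟩ := (hKc.prod isCompact_SymS).exists_isMinOn
    (hKne.prod SymS_nonempty) hPhi
  refine ⟨Phi U L B p₀.1 p₀.2, ?_, fun X hX Y hY => (isMinOn_iff.mp hmin) (X, Y) (Set.mk_mem_prod hX hY)⟩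
  -- positivity
  have hXK := hK hp₀.1
  have hY0 : p₀.2 ≠ 0 := by
    intro h0
    have := hp₀.2.2
    rw [h0] at this
    simp at this
  have h1 : 0 < ((U - B) ^ 2 *
      ((U - p₀.1)⁻¹ * p₀.2 * (U - p₀.1)⁻¹ * p₀.2 * (U - p₀.1)⁻¹)).trace :=
    pos_term_pos _ _ _ hUB hXK.2.1.inv hp₀.2.1 hY0
  have h2 : 0 ≤ ((B - L) ^ 2 *
      ((p₀.1 - L)⁻¹ * p₀.2 * (p₀.1 - L)⁻¹ * p₀.2 * (p₀.1 - L)⁻¹)).trace :=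
    pos_term_nonneg _ _ _ hBL hXK.2.2.inv hp₀.2.1
  unfold Phi
  linarith


lemma Phi_smul (U L B X : Mat) (a : ℝ) (Y : Mat) :
    Phi U L B X (a • Y) = a ^ 2 * Phi U L B X Y := by
  simp only [Phi, Matrix.mul_smul, Matrix.smul_mul, Matrix.trace_smul, smul_eq_mul]
  ring

lemma Phi_scale_bound (U L B : Mat) (K : Set Mat) (c : ℝ)
    (hmin : ∀ X ∈ K, ∀ Y ∈ SymS, c ≤ Phi U L B X Y)
    {X Y : Mat} (hX : X ∈ K) (hY : Yᵀ = Y) :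
    c * (Yᵀ * Y).trace ≤ Phi U L B X Y := by
  by_cases hY0 : Y = 0
  · subst hY0
    simp [Phi]
  · have hr : 0 < (Yᵀ * Y).trace := tr_pos hY0
    set r := (Yᵀ * Y).trace with hrdef
    set s := Real.sqrt r with hsdef
    have hs : 0 < s := Real.sqrt_pos.mpr hr
    have hss : s * s = r := Real.mul_self_sqrt hr.le
    have hmem : s⁻¹ • Y ∈ SymS := by
      refine ⟨by rw [Matrix.transpose_smul, hY], ?_⟩
      have h1 : ((s⁻¹ • Y)ᵀ * (s⁻¹ • Y)).trace = s⁻¹ * (s⁻¹ * r) := by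
        rw [Matrix.transpose_smul, Matrix.smul_mul, Matrix.mul_smul, Matrix.trace_smul,
          Matrix.trace_smul, smul_eq_mul, smul_eq_mul]
      rw [h1, ← hss]
      field_simp
    have h := hmin X hX _ hmem
    rw [Phi_smul] at h
    have hinv : (s⁻¹ : ℝ) ^ 2 = r⁻¹ := by rw [inv_pow, Real.sq_sqrt hr.le]
    rw [hinv] at h
    calc c * r ≤ r⁻¹ * Phi U L B X Y * r := mul_le_mul_of_nonneg_right h hr.le
      _ = Phi U L B X Y := by field_simp

end Stmt6Aux

open Stmt6Aux in
/-- Uniform convexity of the proximal-point terms on compact subsets of the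
admissible region: there is `c > 0` such that for every `X ∈ K` and every symmetric `Y`, the
function `g(t) = tr((X+tY−B̄)²(U−X−tY)⁻¹) + tr((X+tY−B̄)²(X+tY−L)⁻¹)` is twice differentiable
at `t = 0` with `g''(0) ≥ c‖Y‖_F²`. -/
theorem stmt6 (L U B : Matrix (Fin 2) (Fin 2) ℝ)
    (hL : Lᵀ = L) (hU : Uᵀ = U) (hB : Bᵀ = B)
    (hUB : (U - B).PosDef) (hBL : (B - L).PosDef)
    (K : Set (Matrix (Fin 2) (Fin 2) ℝ)) (hKc : IsCompact K)
    (hK : K ⊆ {X | Xᵀ = X ∧ (U - X).PosDef ∧ (X - L).PosDef}) :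
    ∃ c > (0:ℝ), ∀ X ∈ K, ∀ Y : Matrix (Fin 2) (Fin 2) ℝ, Yᵀ = Y →
      ContDiffAt ℝ 2 (fun t : ℝ =>
          (((X + t • Y) - B) ^ 2 * (U - (X + t • Y))⁻¹).trace
        + (((X + t • Y) - B) ^ 2 * ((X + t • Y) - L)⁻¹).trace) 0 ∧
      iteratedDeriv 2 (fun t : ℝ =>
          (((X + t • Y) - B) ^ 2 * (U - (X + t • Y))⁻¹).trace
        + (((X + t • Y) - B) ^ 2 * ((X + t • Y) - L)⁻¹).trace) 0
        ≥ c * (Yᵀ * Y).trace := by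
  obtain ⟨c, hc, hmin⟩ := exists_min L U B hUB hBL K hKc hK
  refine ⟨c, hc, ?_⟩
  intro X hX Y hY
  obtain ⟨hXs, hMX, hNX⟩ := hK hX
  have hM : IsUnit (U - X) := hMX.isUnit
  have hN : IsUnit (X - L) := hNX.isUnit
  obtain ⟨hcd₁, hev₁, hder₁, hdd₁⟩ := main_calc ((U - B) ^ 2) (U - X) Y hM
  obtain ⟨hcd₂, hev₂, hder₂, hdd₂⟩ := main_calc ((B - L) ^ 2) (X - L) (-Y) hN
  have hEq : (fun t : ℝ =>
          (((X + t • Y) - B) ^ 2 * (U - (X + t • Y))⁻¹).trace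
        + (((X + t • Y) - B) ^ 2 * ((X + t • Y) - L)⁻¹).trace) =ᶠ[nhds 0]
      (fun t : ℝ => ((U - B) ^ 2 * ((U - X) - t • Y)⁻¹).trace
        + (((B - L) ^ 2 * ((X - L) - t • (-Y))⁻¹).trace
        + ((U - X).trace + (X - L).trace - 2 * (U - B).trace - 2 * (B - L).trace)) ) := by
    filter_upwards [hev₁, hev₂] with t htM htN
    have e1 : U - (X + t • Y) = (U - X) - t • Y := by rw [sub_add_eq_sub_sub]
    have e2 : (X + t • Y) - L = (X - L) - t • (-Y) := by
      rw [smul_neg, sub_neg_eq_add, add_sub_right_comm]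
    have hA1 : ((X + t • Y) - B) + ((U - X) - t • Y) = U - B := by
      generalize t • Y = Z; abel
    have hA2 : ((B - L) - ((X - L) - t • (-Y))) + ((X - L) - t • (-Y)) = B - L := by
      abel
    have hsq : ((X + t • Y) - B) ^ 2 = ((B - L) - ((X - L) - t • (-Y))) ^ 2 := by
      have hA2' : (B - L) - ((X - L) - t • (-Y)) = -((X + t • Y) - B) := by
        rw [smul_neg, sub_neg_eq_add]; generalize t • Y = Z; abel
      rw [hA2', neg_sq]
    show _ = _
    rw [e1, e2, trace_identity _ _ _ htM hA1, hsq, trace_identity _ _ _ htN hA2]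
    simp only [Matrix.trace_sub, Matrix.trace_smul, Matrix.trace_neg, smul_eq_mul]
    ring
  constructor
  · exact ((hcd₁.add (hcd₂.add contDiffAt_const)).congr_of_eventuallyEq hEq)
  · have hGder : ∀ᶠ t in nhds (0:ℝ), HasDerivAt
        (fun t : ℝ => ((U - B) ^ 2 * ((U - X) - t • Y)⁻¹).trace
          + (((B - L) ^ 2 * ((X - L) - t • (-Y))⁻¹).trace
          + ((U - X).trace + (X - L).trace - 2 * (U - B).trace - 2 * (B - L).trace)))
        (((U - B) ^ 2 * (((U - X) - t • Y)⁻¹ * Y * ((U - X) - t • Y)⁻¹)).trace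
          + ((B - L) ^ 2 * (((X - L) - t • (-Y))⁻¹ * (-Y) * ((X - L) - t • (-Y))⁻¹)).trace) t := by
      filter_upwards [hder₁, hder₂] with t h1 h2
      exact h1.add (h2.add_const _)
    have hdG : deriv (fun t : ℝ => ((U - B) ^ 2 * ((U - X) - t • Y)⁻¹).trace
          + (((B - L) ^ 2 * ((X - L) - t • (-Y))⁻¹).trace
          + ((U - X).trace + (X - L).trace - 2 * (U - B).trace - 2 * (B - L).trace)))
        =ᶠ[nhds 0] fun t : ℝ =>
          (((U - B) ^ 2 * (((U - X) - t • Y)⁻¹ * Y * ((U - X) - t • Y)⁻¹)).trace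
          + ((B - L) ^ 2 * (((X - L) - t • (-Y))⁻¹ * (-Y) * ((X - L) - t • (-Y))⁻¹)).trace) := by
      filter_upwards [hGder] with t h
      exact h.deriv
    have hval : iteratedDeriv 2 (fun t : ℝ =>
          (((X + t • Y) - B) ^ 2 * (U - (X + t • Y))⁻¹).trace
        + (((X + t • Y) - B) ^ 2 * ((X + t • Y) - L)⁻¹).trace) 0 = Phi U L B X Y := by
      rw [hEq.iteratedDeriv_eq 2, iteratedDeriv_succ, iteratedDeriv_one, hdG.deriv_eq,
        (hdd₁.fun_add hdd₂).deriv]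
      simp only [Phi, Matrix.neg_mul, Matrix.mul_neg, neg_neg]
    rw [hval, ge_iff_le]
    exact Phi_scale_bound U L B K c hmin hX hY
end

section
/- For θ ∈ ℝ let R(θ) denote the 2×2 rotation matrix with rows (cos θ, −sin θ) and (sin θ, cos θ). Then for any 2×2 real matrices C and D there exist real numbers c, p, q such that tr(R(θ)ᵀ · C · R(θ) · D) = c + p·cos(2θ) + q·sin(2θ) for all θ ∈ ℝ. -/
open Matrix

/-- The 2×2 rotation matrix with rows `(cos θ, −sin θ)` and `(sin θ, cos θ)`. -/
noncomputable def rot (θ : ℝ) : Matrix (Fin 2) (Fin 2) ℝ :=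
  !![Real.cos θ, -Real.sin θ; Real.sin θ, Real.cos θ]

/-- For any 2×2 real matrices `C`, `D` there exist reals `c`, `p`, `q` with
`tr (R(θ)ᵀ C R(θ) D) = c + p cos 2θ + q sin 2θ` for all `θ`. -/
theorem stmt12 (C D : Matrix (Fin 2) (Fin 2) ℝ) :
    ∃ c p q : ℝ, ∀ θ : ℝ,
      ((rot θ)ᵀ * C * rot θ * D).trace
        = c + p * Real.cos (2 * θ) + q * Real.sin (2 * θ) := by
  refine ⟨(C 0 0 + C 1 1) * (D 0 0 + D 1 1) / 2 + (C 0 1 - C 1 0) * (D 1 0 - D 0 1) / 2,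
    (C 0 0 - C 1 1) * (D 0 0 - D 1 1) / 2 + (C 0 1 + C 1 0) * (D 1 0 + D 0 1) / 2,
    (C 1 0 + C 0 1) * (D 0 0 - D 1 1) / 2 + (C 1 1 - C 0 0) * (D 1 0 + D 0 1) / 2,
    fun θ => ?_⟩
  rw [Real.cos_two_mul, Real.sin_two_mul]
  simp [rot, Matrix.trace_fin_two, Matrix.mul_apply, Fin.sum_univ_two, Matrix.transpose_apply, Matrix.vecHead, Matrix.vecTail]
  linear_combination (C 1 1 * D 0 0 - C 1 0 * D 1 0 - C 0 1 * D 0 1 + C 0 0 * D 1 1) *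
    Real.sin_sq_add_cos_sq θ
end

section
/- For θ ∈ ℝ let R(θ) denote the 2×2 rotation matrix with rows (cos θ, −sin θ) and (sin θ, cos θ). Let B_r be a 2×2 real diagonal matrix, let B̄, C_U, C_L be 2×2 real symmetric matrices, let τ ∈ ℝ, and let l, u ∈ ℝ be such that u·I − B_r and l·I − B_r are invertible. Then there exist real numbers c, p, q such that for all α ∈ ℝ, writing R = R(πα), tr((Rᵀ C_U R + τ(B_r − Rᵀ B̄ R)²)·(u·I − B_r)⁻¹) + tr((Rᵀ C_L R − τ(B_r − Rᵀ B̄ R)²)·(l·I − B_r)⁻¹) = c + p·cos(2πα) + q·sin(2πα). -/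
set_option maxRecDepth 40000
set_option maxHeartbeats 2000000


open Matrix

/-- The single-block hyperbolic approximation composed with the rotational
parametrization `α ↦ R(πα)` is a sinusoid `c + p cos 2πα + q sin 2πα`. -/
theorem stmt13 (Br Bb CU CL : Matrix (Fin 2) (Fin 2) ℝ) (τ l u : ℝ)
    (hBr : Br.IsDiag) (hBb : Bbᵀ = Bb) (hCU : CUᵀ = CU) (hCL : CLᵀ = CL)
    (hu : IsUnit (u • (1 : Matrix (Fin 2) (Fin 2) ℝ) - Br))
    (hl : IsUnit (l • (1 : Matrix (Fin 2) (Fin 2) ℝ) - Br)) :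
    ∃ c p q : ℝ, ∀ α : ℝ,
      (((rot (Real.pi * α))ᵀ * CU * rot (Real.pi * α)
          + τ • (Br - (rot (Real.pi * α))ᵀ * Bb * rot (Real.pi * α)) ^ 2)
        * (u • (1 : Matrix (Fin 2) (Fin 2) ℝ) - Br)⁻¹).trace
      + (((rot (Real.pi * α))ᵀ * CL * rot (Real.pi * α)
          - τ • (Br - (rot (Real.pi * α))ᵀ * Bb * rot (Real.pi * α)) ^ 2)
        * (l • (1 : Matrix (Fin 2) (Fin 2) ℝ) - Br)⁻¹).trace
      = c + p * Real.cos (2 * Real.pi * α) + q * Real.sin (2 * Real.pi * α) := by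
  
  have h01 : Br 0 1 = 0 := hBr (by decide)
  have h10 : Br 1 0 = 0 := hBr (by decide)
  have hBb' : Bb 1 0 = Bb 0 1 := by conv_lhs => rw [← hBb, Matrix.transpose_apply]
  have hCU' : CU 1 0 = CU 0 1 := by conv_lhs => rw [← hCU, Matrix.transpose_apply]
  have hCL' : CL 1 0 = CL 0 1 := by conv_lhs => rw [← hCL, Matrix.transpose_apply]
  -- inverses of the diagonal resolvents
  have key : ∀ r : ℝ, IsUnit (r • (1 : Matrix (Fin 2) (Fin 2) ℝ) - Br) →
      (r • (1 : Matrix (Fin 2) (Fin 2) ℝ) - Br)⁻¹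
        = !![(r - Br 0 0)⁻¹, 0; 0, (r - Br 1 1)⁻¹] := by
    intro r hr
    have hdet : (r • (1 : Matrix (Fin 2) (Fin 2) ℝ) - Br).det
        = (r - Br 0 0) * (r - Br 1 1) := by
      rw [Matrix.det_fin_two]
      simp [Matrix.sub_apply, Matrix.smul_apply, Matrix.one_apply, h01, h10]
    have hne : (r - Br 0 0) * (r - Br 1 1) ≠ 0 := by
      rw [← hdet]
      exact isUnit_iff_ne_zero.mp ((Matrix.isUnit_iff_isUnit_det _).mp hr)
    have h0 : (r - Br 0 0) ≠ 0 := left_ne_zero_of_mul hne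
    have h1 : (r - Br 1 1) ≠ 0 := right_ne_zero_of_mul hne
    refine Matrix.inv_eq_right_inv ?_
    ext i j
    fin_cases i <;> fin_cases j <;>
      simp [Matrix.mul_apply, Fin.sum_univ_two, Matrix.sub_apply, Matrix.smul_apply,
        Matrix.one_apply, h01, h10] <;>
      field_simp
  have hUinv := key u hu
  have hLinv := key l hl
  -- conjugation by a rotation, as an explicit 2×2 literal
  have hM : ∀ (S : Matrix (Fin 2) (Fin 2) ℝ) (θ : ℝ),
      (rot θ)ᵀ * S * rot θ =
      !![S 0 0 * Real.cos θ^2 + (S 0 1 + S 1 0) * Real.cos θ * Real.sin θ + S 1 1 * Real.sin θ^2,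
         S 0 1 * Real.cos θ^2 - S 1 0 * Real.sin θ^2 + (S 1 1 - S 0 0) * Real.cos θ * Real.sin θ;
         S 1 0 * Real.cos θ^2 - S 0 1 * Real.sin θ^2 + (S 1 1 - S 0 0) * Real.cos θ * Real.sin θ,
         S 1 1 * Real.cos θ^2 - (S 0 1 + S 1 0) * Real.cos θ * Real.sin θ + S 0 0 * Real.sin θ^2]
      := by
    intro S θ
    ext i j
    fin_cases i <;> fin_cases j <;>
      simp [rot, Matrix.mul_apply, Matrix.transpose, Matrix.vecHead, Matrix.vecTail,
        Fin.sum_univ_two] <;> ring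
  have eBr : Br = !![Br 0 0, 0; 0, Br 1 1] :=
    (Matrix.eta_fin_two Br).trans (by rw [h01, h10])
  refine ⟨
    (u - Br 0 0)⁻¹ * ((CU 0 0 + CU 1 1)/2 + τ * ((Br 0 0 - (Bb 0 0 + Bb 1 1)/2)^2
        + ((Bb 0 0 - Bb 1 1)/2)^2 + (Bb 0 1)^2))
    + (u - Br 1 1)⁻¹ * ((CU 0 0 + CU 1 1)/2 + τ * ((Br 1 1 - (Bb 0 0 + Bb 1 1)/2)^2
        + ((Bb 0 0 - Bb 1 1)/2)^2 + (Bb 0 1)^2))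
    + (l - Br 0 0)⁻¹ * ((CL 0 0 + CL 1 1)/2 - τ * ((Br 0 0 - (Bb 0 0 + Bb 1 1)/2)^2
        + ((Bb 0 0 - Bb 1 1)/2)^2 + (Bb 0 1)^2))
    + (l - Br 1 1)⁻¹ * ((CL 0 0 + CL 1 1)/2 - τ * ((Br 1 1 - (Bb 0 0 + Bb 1 1)/2)^2
        + ((Bb 0 0 - Bb 1 1)/2)^2 + (Bb 0 1)^2)),
    (u - Br 0 0)⁻¹ * ((CU 0 0 - CU 1 1)/2 - 2*τ*(Br 0 0 - (Bb 0 0 + Bb 1 1)/2)*((Bb 0 0 - Bb 1 1)/2))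
    + (u - Br 1 1)⁻¹ * (-(CU 0 0 - CU 1 1)/2 + 2*τ*(Br 1 1 - (Bb 0 0 + Bb 1 1)/2)*((Bb 0 0 - Bb 1 1)/2))
    + (l - Br 0 0)⁻¹ * ((CL 0 0 - CL 1 1)/2 + 2*τ*(Br 0 0 - (Bb 0 0 + Bb 1 1)/2)*((Bb 0 0 - Bb 1 1)/2))
    + (l - Br 1 1)⁻¹ * (-(CL 0 0 - CL 1 1)/2 - 2*τ*(Br 1 1 - (Bb 0 0 + Bb 1 1)/2)*((Bb 0 0 - Bb 1 1)/2)),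
    (u - Br 0 0)⁻¹ * (CU 0 1 - 2*τ*(Br 0 0 - (Bb 0 0 + Bb 1 1)/2)*(Bb 0 1))
    + (u - Br 1 1)⁻¹ * (-(CU 0 1) + 2*τ*(Br 1 1 - (Bb 0 0 + Bb 1 1)/2)*(Bb 0 1))
    + (l - Br 0 0)⁻¹ * (CL 0 1 + 2*τ*(Br 0 0 - (Bb 0 0 + Bb 1 1)/2)*(Bb 0 1))
    + (l - Br 1 1)⁻¹ * (-(CL 0 1) - 2*τ*(Br 1 1 - (Bb 0 0 + Bb 1 1)/2)*(Bb 0 1)),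
    fun α => ?_⟩
  rw [hUinv, hLinv, hM CU, hM CL, hM Bb]
  rw [show (2 : ℝ) * Real.pi * α = 2 * (Real.pi * α) from by ring,
    Real.cos_two_mul, Real.sin_two_mul]
  conv_lhs => rw [eBr]
  simp [pow_two, Matrix.trace_fin_two, Matrix.mul_apply, Matrix.add_apply,
    Matrix.sub_apply, Matrix.smul_apply, Fin.sum_univ_two, smul_eq_mul,
    hBb', hCU', hCL']
  have h := Real.sin_sq_add_cos_sq (Real.pi * α)
  linear_combination ((1 : ℝ) * CL 1 1 * (l - Br 0 0)⁻¹
    + (1 : ℝ) * CL 0 0 * (l - Br 1 1)⁻¹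
    + (1 : ℝ) * CU 1 1 * (u - Br 0 0)⁻¹
    + (1 : ℝ) * CU 0 0 * (u - Br 1 1)⁻¹
    + (-1 : ℝ) * (Bb 1 1)^2 * τ * (l - Br 1 1)⁻¹ * (Real.cos (Real.pi * α))^2
    + (-1 : ℝ) * (Bb 1 1)^2 * τ * (l - Br 0 0)⁻¹
    + (-1 : ℝ) * (Bb 1 1)^2 * τ * (l - Br 0 0)⁻¹ * (Real.sin (Real.pi * α))^2
    + (1 : ℝ) * (Bb 1 1)^2 * τ * (u - Br 1 1)⁻¹ * (Real.cos (Real.pi * α))^2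
    + (1 : ℝ) * (Bb 1 1)^2 * τ * (u - Br 0 0)⁻¹
    + (1 : ℝ) * (Bb 1 1)^2 * τ * (u - Br 0 0)⁻¹ * (Real.sin (Real.pi * α))^2
    + (2 : ℝ) * Bb 0 1 * Bb 1 1 * τ * (l - Br 1 1)⁻¹ * Real.cos (Real.pi * α) * Real.sin (Real.pi * α)
    + (-2 : ℝ) * Bb 0 1 * Bb 1 1 * τ * (l - Br 0 0)⁻¹ * Real.cos (Real.pi * α) * Real.sin (Real.pi * α)
    + (-2 : ℝ) * Bb 0 1 * Bb 1 1 * τ * (u - Br 1 1)⁻¹ * Real.cos (Real.pi * α) * Real.sin (Real.pi * α)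
    + (2 : ℝ) * Bb 0 1 * Bb 1 1 * τ * (u - Br 0 0)⁻¹ * Real.cos (Real.pi * α) * Real.sin (Real.pi * α)
    + (-1 : ℝ) * (Bb 0 1)^2 * τ * (l - Br 1 1)⁻¹
    + (-1 : ℝ) * (Bb 0 1)^2 * τ * (l - Br 1 1)⁻¹ * (Real.sin (Real.pi * α))^2
    + (-1 : ℝ) * (Bb 0 1)^2 * τ * (l - Br 1 1)⁻¹ * (Real.cos (Real.pi * α))^2
    + (-1 : ℝ) * (Bb 0 1)^2 * τ * (l - Br 0 0)⁻¹
    + (-1 : ℝ) * (Bb 0 1)^2 * τ * (l - Br 0 0)⁻¹ * (Real.sin (Real.pi * α))^2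
    + (-1 : ℝ) * (Bb 0 1)^2 * τ * (l - Br 0 0)⁻¹ * (Real.cos (Real.pi * α))^2
    + (1 : ℝ) * (Bb 0 1)^2 * τ * (u - Br 1 1)⁻¹
    + (1 : ℝ) * (Bb 0 1)^2 * τ * (u - Br 1 1)⁻¹ * (Real.sin (Real.pi * α))^2
    + (1 : ℝ) * (Bb 0 1)^2 * τ * (u - Br 1 1)⁻¹ * (Real.cos (Real.pi * α))^2
    + (1 : ℝ) * (Bb 0 1)^2 * τ * (u - Br 0 0)⁻¹
    + (1 : ℝ) * (Bb 0 1)^2 * τ * (u - Br 0 0)⁻¹ * (Real.sin (Real.pi * α))^2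
    + (1 : ℝ) * (Bb 0 1)^2 * τ * (u - Br 0 0)⁻¹ * (Real.cos (Real.pi * α))^2
    + (2 : ℝ) * Bb 0 0 * Bb 0 1 * τ * (l - Br 1 1)⁻¹ * Real.cos (Real.pi * α) * Real.sin (Real.pi * α)
    + (-2 : ℝ) * Bb 0 0 * Bb 0 1 * τ * (l - Br 0 0)⁻¹ * Real.cos (Real.pi * α) * Real.sin (Real.pi * α)
    + (-2 : ℝ) * Bb 0 0 * Bb 0 1 * τ * (u - Br 1 1)⁻¹ * Real.cos (Real.pi * α) * Real.sin (Real.pi * α)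
    + (2 : ℝ) * Bb 0 0 * Bb 0 1 * τ * (u - Br 0 0)⁻¹ * Real.cos (Real.pi * α) * Real.sin (Real.pi * α)
    + (-1 : ℝ) * (Bb 0 0)^2 * τ * (l - Br 1 1)⁻¹
    + (-1 : ℝ) * (Bb 0 0)^2 * τ * (l - Br 1 1)⁻¹ * (Real.sin (Real.pi * α))^2
    + (-1 : ℝ) * (Bb 0 0)^2 * τ * (l - Br 0 0)⁻¹ * (Real.cos (Real.pi * α))^2
    + (1 : ℝ) * (Bb 0 0)^2 * τ * (u - Br 1 1)⁻¹
    + (1 : ℝ) * (Bb 0 0)^2 * τ * (u - Br 1 1)⁻¹ * (Real.sin (Real.pi * α))^2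
    + (1 : ℝ) * (Bb 0 0)^2 * τ * (u - Br 0 0)⁻¹ * (Real.cos (Real.pi * α))^2
    + (2 : ℝ) * Br 1 1 * Bb 0 0 * τ * (l - Br 1 1)⁻¹
    + (-2 : ℝ) * Br 1 1 * Bb 0 0 * τ * (u - Br 1 1)⁻¹
    + (2 : ℝ) * Br 0 0 * Bb 1 1 * τ * (l - Br 0 0)⁻¹
    + (-2 : ℝ) * Br 0 0 * Bb 1 1 * τ * (u - Br 0 0)⁻¹) * h
end

section
/- Let k ∈ ℕ, let Y be a 2×2 matrix whose entries are real polynomials of degree at most k, and let A_L, A_U, B̄, L, U be fixed 2×2 real matrices and τ ∈ ℝ. Let q denote the real polynomial q = det(L − Y)·det(U − Y) (determinants taken over the polynomial ring), so that deg q ≤ 4k. Then there exists a real polynomial p with deg p ≤ 5k such that for every δ ∈ ℝ with det(L − Y(δ)) ≠ 0 and det(U − Y(δ)) ≠ 0, tr((A_L − τ(Y(δ) − B̄)²)·(L − Y(δ))⁻¹) + tr((A_U + τ(Y(δ) − B̄)²)·(U − Y(δ))⁻¹) = p(δ)/q(δ), where Y(δ) denotes the real 2×2 matrix obtained by evaluating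 each entry of Y at δ. -/
open Matrix Polynomial

section aux

abbrev M2 := Matrix (Fin 2) (Fin 2) (Polynomial ℝ)

lemma deg_mul_entry {A B : M2} {a b : ℕ}
    (hA : ∀ i j, (A i j).natDegree ≤ a) (hB : ∀ i j, (B i j).natDegree ≤ b) :
    ∀ i j, ((A * B) i j).natDegree ≤ a + b := by
  intro i j
  rw [Matrix.mul_apply, Fin.sum_univ_two]
  refine le_trans (Polynomial.natDegree_add_le _ _) (max_le ?_ ?_) <;>
    exact le_trans (Polynomial.natDegree_mul_le) (add_le_add (hA _ _) (hB _ _))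

lemma deg_det {A : M2} {a : ℕ} (hA : ∀ i j, (A i j).natDegree ≤ a) :
    A.det.natDegree ≤ 2 * a := by
  rw [Matrix.det_fin_two, two_mul]
  refine le_trans (Polynomial.natDegree_sub_le _ _) (max_le ?_ ?_) <;>
    exact le_trans (Polynomial.natDegree_mul_le) (add_le_add (hA _ _) (hA _ _))

lemma deg_adj {A : M2} {a : ℕ} (hA : ∀ i j, (A i j).natDegree ≤ a) :
    ∀ i j, (A.adjugate i j).natDegree ≤ a := by
  intro i j
  rw [Matrix.adjugate_fin_two]
  fin_cases i <;> fin_cases j <;>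
    · simp [Polynomial.natDegree_neg]
      apply hA

lemma deg_trace {A : M2} {a : ℕ} (hA : ∀ i j, (A i j).natDegree ≤ a) :
    A.trace.natDegree ≤ a := by
  rw [Matrix.trace_fin_two]
  exact le_trans (Polynomial.natDegree_add_le _ _) (max_le (hA _ _) (hA _ _))

lemma trace_mul_inv (A N : Matrix (Fin 2) (Fin 2) ℝ) (h : N.det ≠ 0) :
    (A * N⁻¹).trace = (A * N.adjugate).trace / N.det := by
  rw [Matrix.inv_def, Ring.inverse_eq_inv', Matrix.mul_smul, Matrix.trace_smul, smul_eq_mul,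
    div_eq_inv_mul]

end aux

/-- Lemma 4.12 of the paper. If the entries of `Y` are polynomials of degree at
most `k`, then with `q = det(L − Y) · det(U − Y)` (degree ≤ 4k) the block of the hyperbolic
approximation evaluated along the parametrization is a rational function `p(δ)/q(δ)` with
`deg p ≤ 5k`. -/
theorem stmt16 (k : ℕ) (Y : Matrix (Fin 2) (Fin 2) (Polynomial ℝ))
    (hY : ∀ i j, (Y i j).natDegree ≤ k)
    (AL AU Bb L U : Matrix (Fin 2) (Fin 2) ℝ) (τ : ℝ) :
    ((L.map Polynomial.C - Y).det * (U.map Polynomial.C - Y).det).natDegree ≤ 4 * k ∧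
    ∃ p : Polynomial ℝ, p.natDegree ≤ 5 * k ∧
      ∀ δ : ℝ, (L - Y.map (fun f => f.eval δ)).det ≠ 0 →
        (U - Y.map (fun f => f.eval δ)).det ≠ 0 →
        ((AL - τ • (Y.map (fun f => f.eval δ) - Bb) ^ 2)
            * (L - Y.map (fun f => f.eval δ))⁻¹).trace
        + ((AU + τ • (Y.map (fun f => f.eval δ) - Bb) ^ 2)
            * (U - Y.map (fun f => f.eval δ))⁻¹).trace
        = p.eval δ
            / (((L.map Polynomial.C - Y).det * (U.map Polynomial.C - Y).det).eval δ) := by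
  set YL : M2 := L.map Polynomial.C - Y with hYL
  set YU : M2 := U.map Polynomial.C - Y with hYU
  set D : M2 := Y - Bb.map Polynomial.C with hD
  set NL : M2 := AL.map Polynomial.C - Polynomial.C τ • D ^ 2 with hNL
  set NU : M2 := AU.map Polynomial.C + Polynomial.C τ • D ^ 2 with hNU
  -- entrywise degree bounds
  have hmapentry : ∀ (M : Matrix (Fin 2) (Fin 2) ℝ) i j,
      ((M.map Polynomial.C) i j).natDegree ≤ k := by
    intro M i j; simp [Matrix.map_apply]
  have hYLdeg : ∀ i j, (YL i j).natDegree ≤ k := by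
    intro i j
    exact le_trans (Polynomial.natDegree_sub_le _ _) (max_le (hmapentry L i j) (hY i j))
  have hYUdeg : ∀ i j, (YU i j).natDegree ≤ k := by
    intro i j
    exact le_trans (Polynomial.natDegree_sub_le _ _) (max_le (hmapentry U i j) (hY i j))
  have hDdeg : ∀ i j, (D i j).natDegree ≤ k := by
    intro i j
    exact le_trans (Polynomial.natDegree_sub_le _ _) (max_le (hY i j) (hmapentry Bb i j))
  have hD2deg : ∀ i j, ((D ^ 2) i j).natDegree ≤ 2 * k := by
    rw [sq, two_mul]; exact deg_mul_entry hDdeg hDdeg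
  have hsmul : ∀ i j, ((Polynomial.C τ • D ^ 2) i j).natDegree ≤ 2 * k := by
    intro i j
    simp only [Matrix.smul_apply, smul_eq_mul]
    exact le_trans Polynomial.natDegree_mul_le
      (by simpa using hD2deg i j)
  have hNLdeg : ∀ i j, (NL i j).natDegree ≤ 2 * k := by
    intro i j
    refine le_trans (Polynomial.natDegree_sub_le _ _) (max_le ?_ (hsmul i j))
    exact le_trans (hmapentry AL i j) (by omega)
  have hNUdeg : ∀ i j, (NU i j).natDegree ≤ 2 * k := by
    intro i j
    refine le_trans (Polynomial.natDegree_add_le _ _) (max_le ?_ (hsmul i j))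
    exact le_trans (hmapentry AU i j) (by omega)
  have hdegq : (YL.det * YU.det).natDegree ≤ 4 * k := by
    refine le_trans Polynomial.natDegree_mul_le ?_
    have := deg_det hYLdeg
    have := deg_det hYUdeg
    omega
  refine ⟨hdegq, ?_⟩
  refine ⟨(NL * YL.adjugate).trace * YU.det + (NU * YU.adjugate).trace * YL.det, ?_, ?_⟩
  · refine le_trans (Polynomial.natDegree_add_le _ _) (max_le ?_ ?_) <;>
      refine le_trans Polynomial.natDegree_mul_le ?_
    · have h1 := deg_trace (A := NL * YL.adjugate)
        (deg_mul_entry hNLdeg (deg_adj hYLdeg))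
      have h2 := deg_det hYUdeg
      omega
    · have h1 := deg_trace (A := NU * YU.adjugate)
        (deg_mul_entry hNUdeg (deg_adj hYUdeg))
      have h2 := deg_det hYLdeg
      omega
  · intro δ hL hU
    set e : Polynomial ℝ →+* ℝ := Polynomial.evalRingHom δ with he
    have hmapC : ∀ (M : Matrix (Fin 2) (Fin 2) ℝ), (M.map Polynomial.C).map e = M := by
      intro M; ext i j; simp [Matrix.map_apply, he]
    have hmapsub : ∀ (A B : M2), (A - B).map e = A.map e - B.map e := by
      intro A B; ext i j; simp [Matrix.map_apply]
    have hmapadd : ∀ (A B : M2), (A + B).map e = A.map e + B.map e := by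
      intro A B; ext i j; simp [Matrix.map_apply]
    have hmapmul : ∀ (A B : M2), (A * B).map e = A.map e * B.map e := by
      intro A B; exact Matrix.map_mul
    have hYe : Y.map (fun f => f.eval δ) = Y.map e := rfl
    have hYLe : YL.map e = L - Y.map (fun f => f.eval δ) := by
      rw [hYL, hmapsub, hmapC]; rfl
    have hYUe : YU.map e = U - Y.map (fun f => f.eval δ) := by
      rw [hYU, hmapsub, hmapC]; rfl
    have hDe : D.map e = Y.map (fun f => f.eval δ) - Bb := by
      rw [hD, hmapsub, hmapC]; rfl
    have hD2e : (D ^ 2).map e = (Y.map (fun f => f.eval δ) - Bb) ^ 2 := by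
      rw [sq, sq, hmapmul, hDe]
    have hsmule : (Polynomial.C τ • D ^ 2).map e
        = τ • (Y.map (fun f => f.eval δ) - Bb) ^ 2 := by
      ext i j
      have h2 : ((D ^ 2).map e) i j = ((Y.map (fun f => f.eval δ) - Bb) ^ 2) i j := by
        rw [hD2e]
      simp only [Matrix.map_apply, he, coe_evalRingHom] at h2 ⊢
      simp only [Matrix.smul_apply, smul_eq_mul, Polynomial.eval_mul, Polynomial.eval_C, h2]
    have hNLe : NL.map e = AL - τ • (Y.map (fun f => f.eval δ) - Bb) ^ 2 := by
      rw [hNL, hmapsub, hmapC, hsmule]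
    have hNUe : NU.map e = AU + τ • (Y.map (fun f => f.eval δ) - Bb) ^ 2 := by
      rw [hNU, hmapadd, hmapC, hsmule]
    have hadjL : YL.adjugate.map e = (L - Y.map (fun f => f.eval δ)).adjugate := by
      rw [← hYLe]; exact (e.map_adjugate YL)
    have hadjU : YU.adjugate.map e = (U - Y.map (fun f => f.eval δ)).adjugate := by
      rw [← hYUe]; exact (e.map_adjugate YU)
    have hdetL : YL.det.eval δ = (L - Y.map (fun f => f.eval δ)).det := by
      rw [← hYLe]; exact e.map_det YL
    have hdetU : YU.det.eval δ = (U - Y.map (fun f => f.eval δ)).det := by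
      rw [← hYUe]; exact e.map_det YU
    have htre : ∀ (A : M2), A.trace.eval δ = (A.map e).trace := by
      intro A; simp [Matrix.trace_fin_two, Matrix.map_apply, he]
    rw [trace_mul_inv _ _ hL, trace_mul_inv _ _ hU]
    rw [Polynomial.eval_mul]
    rw [Polynomial.eval_add, Polynomial.eval_mul, Polynomial.eval_mul]
    rw [htre, htre, hmapmul, hmapmul, hNLe, hNUe, hadjL, hadjU, hdetL, hdetU]
    field_simp
    try ring
end
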